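/- For every integer n ≥ 2 and every β ∈ P_{n+1} with d_{n+1}(β) = 1, one has ∂_n(∂_{n+1}(β)) = ∂_n(d_1(β)). (This is the key identity making the collection 𝒢_n := Ker(d_{n+1} : P_{n+1} → P_n), with face maps d_0 := ∂ and d_i := d_i, a Delta-group; in contrast, the identity ∂_{n-1} ∘ ∂_n = ∂_{n-1} ∘ d_1 fails on all of P_n.) -/

import Mathlib

namespace Braids

/-- The braid relations on the generators `σ_1, …, σ_{n-1}` (indexed by `Fin (n-1)`). -/
def braidRels (n : ℕ) : Set (FreeGroup (Fin (n - 1))) :=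
  {r | (∃ i j : Fin (n - 1), (i : ℕ) + 1 = (j : ℕ) ∧
          r = .of i * .of j * .of i * (.of j * .of i * .of j)⁻¹) ∨
       (∃ i j : Fin (n - 1), (i : ℕ) + 2 ≤ (j : ℕ) ∧
          r = .of i * .of j * (.of j * .of i)⁻¹)}

/-- The Artin braid group on `n` strands, presented by generators and the braid relations. -/
abbrev BraidGroup (n : ℕ) := PresentedGroup (braidRels n)

/-- The Artin generator `σ_{i+1}` (0-indexed). -/
def σ {n : ℕ} (i : Fin (n - 1)) : BraidGroup n := PresentedGroup.of i

/-- The transposition `(i, i+1)` associated to the generator `σ`. -/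
def swapGen (n : ℕ) (i : Fin (n - 1)) : Equiv.Perm (Fin n) :=
  Equiv.swap ⟨i.1, by have := i.2; omega⟩ ⟨i.1 + 1, by have := i.2; omega⟩

private lemma swap_braid {α : Type*} [DecidableEq α] {a b c : α}
    (hab : a ≠ b) (hac : a ≠ c) (hbc : b ≠ c) :
    Equiv.swap a b * Equiv.swap b c * Equiv.swap a b =
      Equiv.swap b c * Equiv.swap a b * Equiv.swap b c := by
  have h1 := Equiv.swap_apply_apply (Equiv.swap a b) b c
  rw [Equiv.swap_apply_right, Equiv.swap_apply_of_ne_of_ne hac.symm hbc.symm,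
    Equiv.swap_inv] at h1
  have h2 := Equiv.swap_apply_apply (Equiv.swap b c) a b
  rw [Equiv.swap_apply_of_ne_of_ne hab hac, Equiv.swap_apply_left, Equiv.swap_inv] at h2
  rw [← h1, ← h2]

private lemma swap_commute {α : Type*} [DecidableEq α] {a b c d : α}
    (hca : c ≠ a) (hcb : c ≠ b) (hda : d ≠ a) (hdb : d ≠ b) :
    Equiv.swap a b * Equiv.swap c d = Equiv.swap c d * Equiv.swap a b := by
  have h := Equiv.swap_apply_apply (Equiv.swap a b) c d
  rw [Equiv.swap_apply_of_ne_of_ne hca hcb, Equiv.swap_apply_of_ne_of_ne hda hdb,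
    Equiv.swap_inv] at h
  nth_rewrite 1 [h]
  rw [← mul_assoc, ← mul_assoc, Equiv.swap_mul_self, one_mul]

theorem braidRels_hold (n : ℕ) :
    ∀ r ∈ braidRels n, FreeGroup.lift (swapGen n) r = 1 := by
  rintro r (⟨i, j, hij, rfl⟩ | ⟨i, j, hij, rfl⟩) <;>
    simp only [map_mul, map_inv, FreeGroup.lift_apply_of, mul_inv_eq_one]
  · have hj : swapGen n j =
        Equiv.swap (⟨i.1 + 1, by have := i.2; have := j.2; omega⟩ : Fin n)
          ⟨i.1 + 2, by have := j.2; omega⟩ := by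
      unfold swapGen
      congr 1 <;> simp only [Fin.mk.injEq] <;> omega
    rw [hj]
    exact swap_braid (by simp only [ne_eq, Fin.mk.injEq]; omega)
      (by simp only [ne_eq, Fin.mk.injEq]; omega) (by simp only [ne_eq, Fin.mk.injEq]; omega)
  · exact swap_commute (by simp only [ne_eq, Fin.mk.injEq]; omega)
      (by simp only [ne_eq, Fin.mk.injEq]; omega) (by simp only [ne_eq, Fin.mk.injEq]; omega)
      (by simp only [ne_eq, Fin.mk.injEq]; omega)

/-- The canonical projection from the braid group to the symmetric group,
sending `σ_i` to the transposition `(i, i+1)`. -/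
def toPerm (n : ℕ) : BraidGroup n →* Equiv.Perm (Fin n) :=
  PresentedGroup.toGroup (braidRels_hold n)

/-- The pure braid group on `n` strands, as a subgroup of the braid group. -/
def PureBraid (n : ℕ) : Subgroup (BraidGroup n) := (toPerm n).ker

/-- The pure braid group `P n` as a group. -/
abbrev P (n : ℕ) := ↥(PureBraid n)

/-- The generator `σ_k` (1-indexed, junk value `1` for out-of-range `k`). -/
def sig (n k : ℕ) : BraidGroup n :=
  if h : 1 ≤ k ∧ k ≤ n - 1 then σ ⟨k - 1, by omega⟩ else 1

/-- The conjugating word `σ_{j-1} σ_{j-2} ⋯ σ_{i+1}`. -/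
def chain (n i j : ℕ) : BraidGroup n :=
  (((List.range (j - i - 1)).map (fun t => sig n (j - 1 - t))).prod)

/-- The pure braid generator `A_{i,j} = σ_{j-1} ⋯ σ_{i+1} σ_i² σ_{i+1}⁻¹ ⋯ σ_{j-1}⁻¹`
(for `1 ≤ i < j ≤ n`; junk values otherwise), as an element of the braid group. -/
def Agen (n i j : ℕ) : BraidGroup n := chain n i j * (sig n i) ^ 2 * (chain n i j)⁻¹

theorem toPerm_sig_sq (n k : ℕ) : (toPerm n (sig n k)) ^ 2 = 1 := by
  unfold sig
  split
  · show (toPerm n (PresentedGroup.of _)) ^ 2 = 1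
    rw [toPerm, PresentedGroup.toGroup.of]
    simp [swapGen, sq, Equiv.swap_mul_self]
  · simp

theorem Agen_mem (n i j : ℕ) : Agen n i j ∈ PureBraid n := by
  have : toPerm n (Agen n i j) = 1 := by
    unfold Agen
    rw [map_mul, map_mul, map_inv, map_pow, toPerm_sig_sq, mul_one, mul_inv_cancel]
  exact this

/-- `A_{i,j}` extended symmetrically: `A_{j,i} := A_{i,j}` and `A_{i,i} := 1`. -/
def ASym (n i j : ℕ) : BraidGroup n := if i = j then 1 else Agen n (min i j) (max i j)

theorem ASym_mem (n i j : ℕ) : ASym n i j ∈ PureBraid n := by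
  unfold ASym
  split
  · exact one_mem _
  · exact Agen_mem n _ _

/-- `A_{0,j} := (A_{1,j} A_{2,j} ⋯ A_{n,j})⁻¹`, as an element of the braid group. -/
def A0gen (n j : ℕ) : BraidGroup n :=
  (((List.range n).map (fun t => ASym n (t + 1) j)).prod)⁻¹

theorem A0gen_mem (n j : ℕ) : A0gen n j ∈ PureBraid n := by
  refine inv_mem (list_prod_mem ?_)
  intro x hx
  simp only [List.mem_map] at hx
  obtain ⟨t, -, rfl⟩ := hx
  exact ASym_mem n _ _

/-- The pure braid generator `A_{i,j}` (with the conventions `A_{j,i} = A_{i,j}`, `A_{i,i} = 1`),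
as an element of the pure braid group. -/
def A (n i j : ℕ) : P n := ⟨ASym n i j, ASym_mem n i j⟩

/-- The element `A_{0,j} = (A_{1,j} A_{2,j} ⋯ A_{n,j})⁻¹` of the pure braid group. -/
def A₀ (n j : ℕ) : P n := ⟨A0gen n j, A0gen_mem n j⟩

/-- The full twist `z_n = A_{1,2} (A_{1,3} A_{2,3}) ⋯ (A_{1,n} A_{2,n} ⋯ A_{n-1,n})`. -/
def fullTwist (n : ℕ) : P n :=
  (((List.range (n - 1)).map
    (fun jt => ((List.range (jt + 1)).map (fun it => A n (it + 1) (jt + 2))).prod)).prod)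

/-- The reindexing map associated with removing the `k`-th strand. -/
def phi (k m : ℕ) : ℕ := if m < k then m else m - 1

/-- `d` is the `k`-th strand-removal homomorphism `P n → P (n-1)`: it is determined by
`d (A_{i,j}) = 1` if `k ∈ {i, j}`, and `d (A_{i,j}) = A_{φ(i),φ(j)}` otherwise. -/
def IsStrandRemoval (n k : ℕ) (d : P n →* P (n - 1)) : Prop :=
  ∀ i j : ℕ, 1 ≤ i → i < j → j ≤ n →
    d (A n i j) = if k = i ∨ k = j then 1 else A (n - 1) (phi k i) (phi k j)

/-- The Brunnian subgroup `Brun_n = ∩_{k=1}^n Ker (d_k)`, for a family `d` of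
strand-removal homomorphisms. -/
def Brunnian (n : ℕ) (d : ℕ → (P n →* P (n - 1))) : Subgroup (P n) :=
  ⨅ k ∈ Finset.Icc 1 n, (d k).ker

/-- `θ` is the automorphism `θ_n` of `P n`: it fixes `A_{i,j}` for `2 ≤ i < j ≤ n` and sends
`A_{1,j}` to `A_{1,j}⁻¹ A_{0,j} A_{1,j}`. -/
def IsTheta (n : ℕ) (θ : MulAut (P n)) : Prop :=
  (∀ i j : ℕ, 2 ≤ i → i < j → j ≤ n → θ (A n i j) = A n i j) ∧
  (∀ j : ℕ, 1 < j → j ≤ n → θ (A n 1 j) = (A n 1 j)⁻¹ * A₀ n j * A n 1 j)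

/-- The homomorphism `∂_n := d_1 ∘ θ_n : P n → P (n-1)`. -/
def del (n : ℕ) (d : ℕ → (P n →* P (n - 1))) (θ : MulAut (P n)) : P n →* P (n - 1) :=
  (d 1).comp θ.toMonoidHom

/-- `Z_n := Brun_n ∩ Ker ∂_n`. -/
def Zgrp (n : ℕ) (d : ℕ → (P n →* P (n - 1))) (θ : MulAut (P n)) : Subgroup (P n) :=
  Brunnian n d ⊓ (del n d θ).ker

/-- `Bd_n := ∂_{n+1}(Brun_{n+1})`, built from strand-removal data on `n+1` strands. -/
def Bd (n : ℕ) (D : ℕ → (P (n + 1) →* P n)) (Θ : MulAut (P (n + 1))) : Subgroup (P n) :=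
  Subgroup.map (del (n + 1) D Θ) (Brunnian (n + 1) D)

/-- `w` is the automorphism `w_n` of `P n`: it fixes `A_{i,j}` for `1 ≤ i < j ≤ n-1` and sends
`A_{i,n}` to `A_{i,n} A_{0,i} A_{i,n}⁻¹` for `1 ≤ i ≤ n-1`. -/
def IsW (n : ℕ) (w : MulAut (P n)) : Prop :=
  (∀ i j : ℕ, 1 ≤ i → i < j → j ≤ n - 1 → w (A n i j) = A n i j) ∧
  (∀ i : ℕ, 1 ≤ i → i ≤ n - 1 → w (A n i n) = A n i n * A₀ n i * (A n i n)⁻¹)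

/-!
Both sides are homomorphisms in `β`, so it suffices to compare them on generators of
`Ker d_{n+1}`, which is generated by the `A_{i,n+1}`. Indeed, these generate a subgroup `N` that
is normal in `P_{n+1}`, and adding a strand on the right gives a section `s` of `d_{n+1}` with
`x ≡ s (d_{n+1} x)` modulo `N` on the generators `A_{i,j}`, hence everywhere; this uses Artin's
theorem that the `A_{i,j}` generate `P_{n+1}`, which in turn reduces to the Coxeter presentation
of the symmetric group once the subgroup generated by the `A_{i,j}` is known to be normal in the
braid group. On `A_{i,n+1}` with `i ≥ 2` the automorphism `θ_{n+1}` acts trivially. On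
`A_{1,n+1}`, `∂_{n+1}` gives `A_{0,n}` and `d_1` gives `1`, and `∂_n (A_{0,n}) = 1` since
`d_1 ∘ θ_n` sends the factors of `A_{0,n}⁻¹ = A_{1,n} ⋯ A_{n,n}` to
`A_{0,n-1}, A_{1,n-1}, …, A_{n-1,n-1}`.
-/

open Subgroup Equiv

theorem sig_eq_one {m k : ℕ} (h : ¬(1 ≤ k ∧ k ≤ m - 1)) : sig m k = 1 := dif_neg h

theorem σ_eq_sig {m : ℕ} (i : Fin (m - 1)) : σ i = sig m (i + 1) := by
  rw [sig, dif_pos (by omega)]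
  rfl

theorem σ_braid {m : ℕ} {i j : Fin (m - 1)} (h : (i : ℕ) + 1 = j) :
    σ i * σ j * σ i = σ j * σ i * σ j :=
  PresentedGroup.mk_eq_mk_of_mul_inv_mem (Or.inl ⟨i, j, h, rfl⟩)

theorem σ_commute {m : ℕ} {i j : Fin (m - 1)} (h : (i : ℕ) + 2 ≤ j) : σ i * σ j = σ j * σ i :=
  PresentedGroup.mk_eq_mk_of_mul_inv_mem (Or.inr ⟨i, j, h, rfl⟩)

theorem sig_braid {m k : ℕ} (hk : 1 ≤ k) (hkm : k + 2 ≤ m) :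
    sig m k * sig m (k + 1) * sig m k = sig m (k + 1) * sig m k * sig m (k + 1) := by
  rw [sig, sig, dif_pos (by omega), dif_pos (by omega)]
  exact σ_braid (by dsimp only; omega)

theorem sig_commute {m k l : ℕ} (h : k + 2 ≤ l) : Commute (sig m k) (sig m l) := by
  by_cases hk : 1 ≤ k ∧ k ≤ m - 1
  · by_cases hl : 1 ≤ l ∧ l ≤ m - 1
    · rw [sig, sig, dif_pos hk, dif_pos hl]
      exact σ_commute (by dsimp only; omega)
    · rw [sig_eq_one hl]
      exact Commute.one_right _
  · rw [sig_eq_one hk]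
    exact Commute.one_left _

section DescProd

variable {G : Type*} [Group G] {g : ℕ → G} {a b k : ℕ}

/-- The descending product `g a * g (a - 1) * ⋯ * g b`. -/
def descProd (g : ℕ → G) (a b : ℕ) : G :=
  ((List.range (a + 1 - b)).map fun t => g (a - t)).prod

theorem descProd_of_lt (h : a < b) : descProd g a b = 1 := by
  rw [descProd, show a + 1 - b = 0 by omega]
  rfl

theorem descProd_succ (h : b ≤ a + 1) : descProd g (a + 1) b = g (a + 1) * descProd g a b := by
  rw [descProd, descProd, show a + 1 + 1 - b = a + 1 - b + 1 by omega, List.range_succ_eq_map,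
    List.map_cons, List.prod_cons, List.map_map, Nat.sub_zero]
  congr 3
  funext t
  simp only [Function.comp_apply, Nat.succ_eq_add_one]
  congr 1
  omega

theorem descProd_eq_descProd_mul (h : b ≤ a) : descProd g a b = descProd g a (b + 1) * g b := by
  rw [descProd, descProd, show a + 1 - b = a - b + 1 by omega,
    show a + 1 - (b + 1) = a - b by omega, List.range_succ, List.map_append, List.prod_append]
  simp only [List.map_cons, List.map_nil, List.prod_cons, List.prod_nil, mul_one]
  congr 2
  omega

theorem commute_descProd {x : G} (hx : ∀ p, b ≤ p → p ≤ a → Commute x (g p)) :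
    Commute x (descProd g a b) := by
  refine Commute.list_prod_right _ _ fun y hy => ?_
  obtain ⟨t, ht, rfl⟩ := List.mem_map.mp hy
  rw [List.mem_range] at ht
  exact hx (a - t) (by omega) (by omega)

theorem mul_descProd_eq_descProd_mul
    (hcomm : ∀ p q, b ≤ p → p + 2 ≤ q → q ≤ a → Commute (g p) (g q))
    (hbraid : g k * g (k + 1) * g k = g (k + 1) * g k * g (k + 1))
    (hk : 1 ≤ k) (hb : b ≤ k) (hka : k < a) :
    g k * descProd g a b = descProd g a b * g (k + 1) := by
  induction a, hka using Nat.le_induction with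
  | base =>
    obtain ⟨k, rfl⟩ : ∃ l, k = l + 1 := ⟨k - 1, by omega⟩
    rw [descProd_succ (by omega), descProd_succ hb]
    have hc : Commute (g (k + 2)) (descProd g k b) :=
      commute_descProd fun p hp hpk => (hcomm p (k + 2) hp (by omega) le_rfl).symm
    calc g (k + 1) * (g (k + 2) * (g (k + 1) * descProd g k b))
        = (g (k + 1) * g (k + 2) * g (k + 1)) * descProd g k b := by group
      _ = g (k + 2) * g (k + 1) * (g (k + 2) * descProd g k b) := by rw [hbraid]; group
      _ = g (k + 2) * (g (k + 1) * descProd g k b) * g (k + 2) := by rw [hc.eq]; group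
  | succ a hka ih =>
    rw [descProd_succ (by omega)]
    calc g k * (g (a + 1) * descProd g a b) = g (a + 1) * (g k * descProd g a b) := by
          rw [← mul_assoc, (hcomm k (a + 1) hb (by omega) le_rfl).eq, mul_assoc]
      _ = g (a + 1) * descProd g a b * g (k + 1) := by
          rw [ih fun p q hp hpq hq => hcomm p q hp hpq (by omega), mul_assoc]

end DescProd

section BraidIdentities

variable {m i j k : ℕ}

theorem chain_eq_descProd (m i j : ℕ) : chain m i j = descProd (sig m) (j - 1) (i + 1) := by
  rw [chain, descProd, show j - 1 + 1 - (i + 1) = j - i - 1 by omega]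

theorem chain_of_le (h : j ≤ i + 1) : chain m i j = 1 := by
  rw [chain_eq_descProd, descProd_of_lt (by omega)]

theorem chain_succ (h : i < j) : chain m i (j + 1) = sig m j * chain m i j := by
  rw [chain_eq_descProd, chain_eq_descProd, Nat.add_sub_cancel,
    show j = j - 1 + 1 by omega, descProd_succ (by omega), Nat.add_sub_cancel]

theorem chain_eq_chain_mul_sig (h : i + 1 < j) :
    chain m i j = chain m (i + 1) j * sig m (i + 1) := by
  rw [chain_eq_descProd, chain_eq_descProd, descProd_eq_descProd_mul (by omega)]

theorem commute_sig_chain (h : k < i ∨ j < k) : Commute (sig m k) (chain m i j) := by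
  rw [chain_eq_descProd]
  refine commute_descProd fun p hp hpj => ?_
  rcases h with h | h
  · exact sig_commute (by omega)
  · exact (sig_commute (by omega)).symm

theorem sig_mul_chain (hik : i < k) (hkj : k + 2 ≤ j) (hj : j ≤ m) :
    sig m k * chain m i j = chain m i j * sig m (k + 1) := by
  rw [chain_eq_descProd]
  exact mul_descProd_eq_descProd_mul (fun p q _ hpq _ => sig_commute hpq)
    (sig_braid (by omega) (by omega)) (by omega) (by omega) (by omega)

theorem agen_succ (h : i < j) : Agen m i (j + 1) = sig m j * Agen m i j * (sig m j)⁻¹ := by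
  rw [Agen, Agen, chain_succ h]
  group

theorem agen_self_succ (m k : ℕ) : Agen m k (k + 1) = sig m k ^ 2 := by
  rw [Agen, chain_of_le le_rfl, one_mul, inv_one, mul_one]

theorem agen_eq_conj (m i j : ℕ) : Agen m i j = MulAut.conj (chain m i j) (sig m i ^ 2) := rfl

theorem commute_sig_agen (hij : i < j) (hj : j ≤ m)
    (h : k + 2 ≤ i ∨ i < k ∧ k + 2 ≤ j ∨ j < k) : Commute (sig m k) (Agen m i j) := by
  rw [agen_eq_conj, MulAut.conj_apply]
  rcases h with h | ⟨hik, hkj⟩ | h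
  · have hc : Commute (sig m k) (chain m i j) := commute_sig_chain (Or.inl (by omega))
    have hs : Commute (sig m k) (sig m i) := sig_commute (by omega)
    exact (hc.mul_right (hs.pow_right 2)).mul_right hc.inv_right
  · have hk : sig m k = MulAut.conj (chain m i j) (sig m (k + 1)) := by
      rw [MulAut.conj_apply, ← sig_mul_chain hik hkj hj, mul_inv_cancel_right]
    rw [hk, ← MulAut.conj_apply]
    exact (((sig_commute (by omega)).pow_left 2).symm).map _
  · have hc : Commute (sig m k) (chain m i j) := commute_sig_chain (Or.inr h)
    have hs : Commute (sig m k) (sig m i) := (sig_commute (by omega)).symm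
    exact (hc.mul_right (hs.pow_right 2)).mul_right hc.inv_right

theorem commute_conj {G : Type*} [Group G] {x c : G} (h : Commute x c) (y : G) :
    x * (c * y * c⁻¹) * x⁻¹ = c * (x * y * x⁻¹) * c⁻¹ := by
  calc x * (c * y * c⁻¹) * x⁻¹ = (x * c) * y * (x * c)⁻¹ := by group
    _ = (c * x) * y * (c * x)⁻¹ := by rw [h.eq]
    _ = c * (x * y * x⁻¹) * c⁻¹ := by group

theorem conj_conj_sq_of_braid {G : Type*} [Group G] {x y : G} (h : x * y * x = y * x * y) :
    x * (y * x ^ 2 * y⁻¹) * x⁻¹ = y ^ 2 := by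
  calc x * (y * x ^ 2 * y⁻¹) * x⁻¹ = (x * y * x) * x * y⁻¹ * x⁻¹ := by rw [sq]; group
    _ = (y * x * y) * x * y⁻¹ * x⁻¹ := by rw [h]
    _ = y * (x * y * x) * y⁻¹ * x⁻¹ := by group
    _ = y * (y * x * y) * y⁻¹ * x⁻¹ := by rw [h]
    _ = y ^ 2 := by rw [sq]; group

theorem conj_sq_of_braid {G : Type*} [Group G] {x y : G} (h : x * y * x = y * x * y) :
    x * y ^ 2 * x⁻¹ = y⁻¹ * x ^ 2 * y := by
  have key : y * (x * (y * y)) = x * x * y * x := by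
    calc y * (x * (y * y)) = (y * x * y) * y := by group
      _ = (x * y * x) * y := by rw [h]
      _ = x * (y * x * y) := by group
      _ = x * (x * y * x) := by rw [h]
      _ = x * x * y * x := by group
  calc x * y ^ 2 * x⁻¹ = y⁻¹ * (y * (x * (y * y))) * x⁻¹ := by rw [sq]; group
    _ = y⁻¹ * x ^ 2 * y := by rw [key, sq]; group

theorem sig_conj_agen (hi : 1 ≤ i) (hij : i + 1 < j) (hj : j ≤ m) :
    sig m i * Agen m i j * (sig m i)⁻¹ = Agen m (i + 1) j := by
  have hc : Commute (sig m i) (chain m (i + 1) j) := commute_sig_chain (Or.inl (Nat.lt_succ_self _))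
  rw [Agen, Agen, chain_eq_chain_mul_sig hij]
  calc sig m i * (chain m (i + 1) j * sig m (i + 1) * sig m i ^ 2 *
        (chain m (i + 1) j * sig m (i + 1))⁻¹) * (sig m i)⁻¹
      = sig m i * (chain m (i + 1) j * (sig m (i + 1) * sig m i ^ 2 * (sig m (i + 1))⁻¹) *
        (chain m (i + 1) j)⁻¹) * (sig m i)⁻¹ := by group
    _ = chain m (i + 1) j * sig m (i + 1) ^ 2 * (chain m (i + 1) j)⁻¹ := by
      rw [commute_conj hc, conj_conj_sq_of_braid (sig_braid hi (by omega))]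

theorem sig_conj_agen_succ (hk : 1 ≤ k) (hkj : k + 1 < j) (hj : j ≤ m) :
    sig m k * Agen m (k + 1) j * (sig m k)⁻¹ =
      (Agen m (k + 1) j)⁻¹ * Agen m k j * Agen m (k + 1) j := by
  have hc : Commute (sig m k) (chain m (k + 1) j) := commute_sig_chain (Or.inl (Nat.lt_succ_self _))
  rw [Agen, Agen, chain_eq_chain_mul_sig hkj, commute_conj hc,
    conj_sq_of_braid (sig_braid hk (by omega)), sq, sq]
  group

theorem sig_inv_conj_agen_succ (hk : 1 ≤ k) (hkj : k + 1 < j) (hj : j ≤ m) :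
    (sig m k)⁻¹ * Agen m (k + 1) j * sig m k = Agen m k j := by
  rw [← sig_conj_agen hk hkj hj]
  group

theorem sig_inv_conj_agen (hk : 1 ≤ k) (hkj : k + 1 < j) (hj : j ≤ m) :
    (sig m k)⁻¹ * Agen m k j * sig m k = Agen m k j * Agen m (k + 1) j * (Agen m k j)⁻¹ := by
  have h : Agen m k j = Agen m (k + 1) j * (sig m k * Agen m (k + 1) j * (sig m k)⁻¹) *
      (Agen m (k + 1) j)⁻¹ := by
    rw [sig_conj_agen_succ hk hkj hj]
    group
  calc (sig m k)⁻¹ * Agen m k j * sig m k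
      = ((sig m k)⁻¹ * Agen m (k + 1) j * sig m k) * Agen m (k + 1) j *
        ((sig m k)⁻¹ * Agen m (k + 1) j * sig m k)⁻¹ := by
        nth_rewrite 1 [h]
        group
    _ = Agen m k j * Agen m (k + 1) j * (Agen m k j)⁻¹ := by
      rw [sig_inv_conj_agen_succ hk hkj hj]

end BraidIdentities

theorem mem_normalizer_closure_of_conj {G : Type*} [Group G] {s : Set G} {x : G}
    (hconj : ∀ g ∈ s, x * g * x⁻¹ ∈ closure s)
    (hconj_inv : ∀ g ∈ s, x⁻¹ * g * x ∈ closure s) :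
    x ∈ normalizer (closure s : Set G) := by
  rw [mem_normalizer_iff_map_conj_eq, MonoidHom.map_closure]
  refine le_antisymm ((closure_le _).mpr ?_) ((closure_le _).mpr fun g hg => ?_)
  · rintro _ ⟨g, hg, rfl⟩
    exact hconj g hg
  · rw [← MonoidHom.map_closure]
    exact ⟨_, hconj_inv g hg, by simp [mul_assoc]⟩

theorem mem_normalizer_closure_of_conj_of_sq_mem {G : Type*} [Group G] {s : Set G} {x : G}
    (hconj : ∀ g ∈ s, x * g * x⁻¹ ∈ closure s) (hsq : x ^ 2 ∈ closure s) :
    x ∈ normalizer (closure s : Set G) := by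
  refine mem_normalizer_closure_of_conj hconj fun g hg => ?_
  have h : x⁻¹ * g * x = (x ^ 2)⁻¹ * (x * g * x⁻¹) * x ^ 2 := by rw [sq]; group
  rw [h]
  exact mul_mem (mul_mem (inv_mem hsq) (hconj g hg)) hsq

def pairs (m : ℕ) : Set (ℕ × ℕ) := {p | 1 ≤ p.1 ∧ p.1 < p.2 ∧ p.2 ≤ m}

def column (j : ℕ) : Set (ℕ × ℕ) := {p | 1 ≤ p.1 ∧ p.1 < p.2 ∧ p.2 = j}

def agenSet (m : ℕ) (I : Set (ℕ × ℕ)) : Set (BraidGroup m) := (fun p => Agen m p.1 p.2) '' I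

section Normality

variable {m i j k : ℕ}

theorem agen_mem_closure {I : Set (ℕ × ℕ)} (h : (i, j) ∈ I) :
    Agen m i j ∈ closure (agenSet m I) :=
  Subgroup.subset_closure ⟨(i, j), h, rfl⟩

theorem sig_mem_normalizer_column (hkj : k + 1 < j) (hj : j ≤ m) :
    sig m k ∈ normalizer (closure (agenSet m (column j)) : Set (BraidGroup m)) := by
  rcases Nat.eq_zero_or_pos k with rfl | hk
  · rw [sig_eq_one (by omega)]
    exact one_mem _
  refine mem_normalizer_closure_of_conj ?_ ?_ <;> rintro _ ⟨⟨i, _⟩, ⟨hi, hij, rfl⟩, rfl⟩ <;>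
    dsimp only at hi hij hkj hj ⊢
  · rcases (show i = k + 1 ∨ i = k ∨ k + 2 ≤ i ∨ i < k by omega) with rfl | rfl | h | h
    · rw [sig_conj_agen_succ hk hkj hj]
      exact mul_mem (mul_mem (inv_mem (agen_mem_closure ⟨by omega, hij, rfl⟩))
        (agen_mem_closure ⟨hk, by omega, rfl⟩)) (agen_mem_closure ⟨by omega, hij, rfl⟩)
    · rw [sig_conj_agen hk hkj hj]
      exact agen_mem_closure ⟨by omega, hkj, rfl⟩
    · rw [(commute_sig_agen hij hj (Or.inl h)).eq, mul_inv_cancel_right]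
      exact agen_mem_closure ⟨hi, hij, rfl⟩
    · rw [(commute_sig_agen hij hj (Or.inr (Or.inl ⟨h, by omega⟩))).eq, mul_inv_cancel_right]
      exact agen_mem_closure ⟨hi, hij, rfl⟩
  · rcases (show i = k + 1 ∨ i = k ∨ k + 2 ≤ i ∨ i < k by omega) with rfl | rfl | h | h
    · rw [sig_inv_conj_agen_succ hk hkj hj]
      exact agen_mem_closure ⟨hk, by omega, rfl⟩
    · rw [sig_inv_conj_agen hk hkj hj]
      exact mul_mem (mul_mem (agen_mem_closure ⟨hk, by omega, rfl⟩)
        (agen_mem_closure ⟨by omega, hkj, rfl⟩)) (inv_mem (agen_mem_closure ⟨hk, by omega, rfl⟩))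
    · rw [(commute_sig_agen hij hj (Or.inl h)).inv_left.eq, inv_mul_cancel_right]
      exact agen_mem_closure ⟨hi, hij, rfl⟩
    · rw [(commute_sig_agen hij hj (Or.inr (Or.inl ⟨h, by omega⟩))).inv_left.eq,
        inv_mul_cancel_right]
      exact agen_mem_closure ⟨hi, hij, rfl⟩

theorem sig_mem_normalizer_agen (hk : 1 ≤ k) (hkm : k < m) :
    sig m k ∈ normalizer (closure (agenSet m (pairs m)) : Set (BraidGroup m)) := by
  refine mem_normalizer_closure_of_conj_of_sq_mem ?_
    (agen_self_succ m k ▸ agen_mem_closure ⟨hk, by omega, by omega⟩)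
  rintro _ ⟨⟨i, j⟩, ⟨hi, hij, hj⟩, rfl⟩
  dsimp only at hi hij hj ⊢
  rcases (show k + 1 < j ∨ k + 1 = j ∨ k = j ∨ j < k by omega) with h | rfl | rfl | h
  · have hcol : Agen m i j ∈ closure (agenSet m (column j)) := agen_mem_closure ⟨hi, hij, rfl⟩
    refine closure_mono (Set.image_mono fun p hp => ?_)
      ((mem_normalizer_iff.mp (sig_mem_normalizer_column h hj) _).mp hcol)
    exact ⟨hp.1, hp.2.1, hp.2.2 ▸ hj⟩
  · rcases Nat.lt_or_ge i k with hik | hik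
    · have h : sig m k * Agen m i (k + 1) * (sig m k)⁻¹ =
          Agen m k (k + 1) * Agen m i k * (Agen m k (k + 1))⁻¹ := by
        rw [agen_succ hik, agen_self_succ, sq]
        group
      rw [h]
      exact mul_mem (mul_mem (agen_mem_closure ⟨hk, by omega, hj⟩)
        (agen_mem_closure ⟨hi, hik, by omega⟩)) (inv_mem (agen_mem_closure ⟨hk, by omega, hj⟩))
    · obtain rfl : i = k := by omega
      rw [agen_self_succ, (Commute.self_pow _ 2).eq, mul_inv_cancel_right, ← agen_self_succ]
      exact agen_mem_closure ⟨hi, hij, hj⟩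
  · rw [← agen_succ hij]
    exact agen_mem_closure ⟨hi, by omega, by omega⟩
  · rw [(commute_sig_agen hij hj (Or.inr (Or.inr h))).eq, mul_inv_cancel_right]
    exact agen_mem_closure ⟨hi, hij, hj⟩

theorem closure_agenSet_normal (m : ℕ) : (closure (agenSet m (pairs m))).Normal := by
  rw [← normalizer_eq_top_iff, eq_top_iff, ← PresentedGroup.closure_range_of, closure_le]
  rintro _ ⟨i, rfl⟩
  rw [show PresentedGroup.of i = sig m (i + 1) from σ_eq_sig i]
  exact sig_mem_normalizer_agen (by omega) (by omega)

end Normality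

section TypeA

variable {Q : Type*} [Group Q] {m : ℕ} {g : ℕ → Q}

/-- The defining relations of the Coxeter presentation of `Perm (Fin m)`, for the family
`g 1, …, g (m - 1)` of would-be adjacent transpositions. -/
structure IsTypeARel (m : ℕ) (g : ℕ → Q) : Prop where
  mul_self : ∀ k, 1 ≤ k → k < m → g k * g k = 1
  braid : ∀ k, 1 ≤ k → k + 2 ≤ m → g k * g (k + 1) * g k = g (k + 1) * g k * g (k + 1)
  commute : ∀ p q, 1 ≤ p → p + 2 ≤ q → q < m → Commute (g p) (g q)

theorem IsTypeARel.of_hom (φ : BraidGroup m →* Q) (h : ∀ k, φ (sig m k) ^ 2 = 1) :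
    IsTypeARel m fun k => φ (sig m k) where
  mul_self k _ _ := by rw [← sq, h]
  braid k hk hkm := by simp only [← map_mul, sig_braid hk hkm]
  commute _ _ _ hpq _ := (sig_commute hpq).map φ

theorem IsTypeARel.shift (h : IsTypeARel (m + 1) g) : IsTypeARel m fun k => g (k + 1) where
  mul_self k _ hkm := h.mul_self (k + 1) (by omega) (by omega)
  braid k _ hkm := h.braid (k + 1) (by omega) (by omega)
  commute p q _ hpq hqm := h.commute (p + 1) (q + 1) (by omega) (by omega) (by omega)

theorem IsTypeARel.mul_descProd_of_lt (h : IsTypeARel (m + 1) g) {k a : ℕ} (hk : 1 ≤ k)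
    (hka : k < a) (ham : a ≤ m) : g k * descProd g a 1 = descProd g a 1 * g (k + 1) :=
  mul_descProd_eq_descProd_mul (fun p q hp hpq hqa => h.commute p q hp hpq (by omega))
    (h.braid k hk (by omega)) hk hk hka

theorem IsTypeARel.mul_descProd_self (h : IsTypeARel (m + 1) g) {a : ℕ} (ham : a + 1 ≤ m) :
    g (a + 1) * descProd g (a + 1) 1 = descProd g a 1 := by
  rw [descProd_succ (by omega), ← mul_assoc, h.mul_self (a + 1) (by omega) (by omega), one_mul]

theorem IsTypeARel.commute_descProd (h : IsTypeARel (m + 1) g) {k a : ℕ} (hak : a + 2 ≤ k)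
    (hkm : k ≤ m) : Commute (g k) (descProd g a 1) :=
  Braids.commute_descProd fun p hp hpa => (h.commute p k hp (by omega) (by omega)).symm

end TypeA

section PermFin

variable {m : ℕ}

theorem toPerm_sig_eq_swap {k : ℕ} (hk : 1 ≤ k) (hkm : k < m) :
    toPerm m (sig m k) = swap ⟨k - 1, by omega⟩ ⟨k, hkm⟩ := by
  rw [sig, dif_pos ⟨hk, by omega⟩, σ, toPerm, PresentedGroup.toGroup.of, swapGen]
  congr 1
  ext
  simp only
  omega

/-- The permutation of `Fin (m + 1)` fixing `0` and acting as `τ` on the successors. -/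
def succPerm (τ : Perm (Fin m)) : Perm (Fin (m + 1)) := Perm.decomposeFin.symm (0, τ)

theorem succPerm_apply_zero (τ : Perm (Fin m)) : succPerm τ 0 = 0 :=
  Perm.decomposeFin_symm_apply_zero _ _

theorem succPerm_apply_succ (τ : Perm (Fin m)) (i : Fin m) : succPerm τ i.succ = (τ i).succ := by
  simp [succPerm]

theorem succPerm_one : succPerm (1 : Perm (Fin m)) = 1 := by
  rw [succPerm, Perm.decomposeFin_symm_of_one, swap_self, Perm.one_def]

theorem succPerm_mul (τ τ' : Perm (Fin m)) : succPerm (τ * τ') = succPerm τ * succPerm τ' := by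
  ext x
  cases x using Fin.cases <;> simp [succPerm_apply_zero, succPerm_apply_succ]

theorem succPerm_swap (a b : Fin m) : succPerm (swap a b) = swap a.succ b.succ := by
  ext x
  cases x using Fin.cases with
  | zero => simp [succPerm_apply_zero, swap_apply_of_ne_of_ne (Fin.succ_ne_zero a).symm
      (Fin.succ_ne_zero b).symm]
  | succ i => simp [succPerm_apply_succ, swap_apply_def, apply_ite Fin.succ]

theorem succPerm_toPerm_sig {k : ℕ} (hk : 1 ≤ k) (hkm : k < m) :
    succPerm (toPerm m (sig m k)) = toPerm (m + 1) (sig (m + 1) (k + 1)) := by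
  rw [toPerm_sig_eq_swap hk hkm, toPerm_sig_eq_swap (by omega) (by omega), succPerm_swap]
  congr 1
  ext
  simp only [Fin.val_succ]
  omega

theorem decomposeFin_succPerm (τ : Perm (Fin m)) : Perm.decomposeFin (succPerm τ) = (0, τ) :=
  Equiv.apply_symm_apply _ _

theorem succPerm_decomposeFin_snd {x : Perm (Fin (m + 1))} (hx : x 0 = 0) :
    succPerm (Perm.decomposeFin x).2 = x := by
  have h := Perm.decomposeFin_symm_apply_zero (Perm.decomposeFin x).1 (Perm.decomposeFin x).2
  rw [Prod.mk.eta, Equiv.symm_apply_apply, hx] at h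
  rw [succPerm, h, Prod.mk.eta, Equiv.symm_apply_apply]

/-- `s_a ⋯ s_1` with `s_k` the image of `σ_k`: the cycle `0 ↦ a ↦ a - 1 ↦ ⋯ ↦ 1 ↦ 0`. -/
def cyc (m a : ℕ) : Perm (Fin (m + 1)) := descProd (fun k => toPerm (m + 1) (sig (m + 1) k)) a 1

theorem cyc_apply_zero {a : ℕ} (ha : a ≤ m) : cyc m a 0 = ⟨a, by omega⟩ := by
  induction a with
  | zero => rw [cyc, descProd_of_lt zero_lt_one]; rfl
  | succ a ih =>
    rw [cyc, descProd_succ (by omega), Perm.mul_apply, ← cyc, ih (by omega),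
      toPerm_sig_eq_swap (by omega) (by omega)]
    exact swap_apply_left _ _

theorem cyc_mul_succPerm_decomposeFin (π : Perm (Fin (m + 1))) :
    cyc m (π 0) * succPerm (Perm.decomposeFin ((cyc m (π 0))⁻¹ * π)).2 = π := by
  rw [succPerm_decomposeFin_snd, mul_inv_cancel_left]
  rw [Perm.mul_apply, Perm.inv_eq_iff_eq, cyc_apply_zero (by omega)]

end PermFin

section Lift

variable {Q : Type*} [Group Q] {m : ℕ} {g : ℕ → Q}

/-- Extension of `ρ` from `Perm (Fin m)` to `Perm (Fin (m + 1))` along the coset decomposition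
`π = cyc m (π 0) * succPerm τ`, the cycle `cyc m a` being sent to `g a * ⋯ * g 1`. -/
def extendAlongCyc (g : ℕ → Q) (ρ : Perm (Fin m) → Q) (π : Perm (Fin (m + 1))) : Q :=
  descProd g (π 0) 1 * ρ (Perm.decomposeFin ((cyc m (π 0))⁻¹ * π)).2

theorem extendAlongCyc_cyc_mul (ρ : Perm (Fin m) → Q) {a : ℕ} (ha : a ≤ m) (τ : Perm (Fin m)) :
    extendAlongCyc g ρ (cyc m a * succPerm τ) = descProd g a 1 * ρ τ := by
  have h0 : ((cyc m a * succPerm τ) 0 : ℕ) = a := by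
    rw [Perm.mul_apply, succPerm_apply_zero, cyc_apply_zero ha]
  rw [extendAlongCyc, h0, inv_mul_cancel_left, decomposeFin_succPerm]

theorem IsTypeARel.extendAlongCyc_mul (hg : IsTypeARel (m + 1) g) {ρ : Perm (Fin m) → Q}
    (hρ : ∀ k, 1 ≤ k → k < m → ∀ π, ρ (toPerm m (sig m k) * π) = g (k + 1) * ρ π)
    {k : ℕ} (hk : 1 ≤ k) (hkm : k < m + 1) (π : Perm (Fin (m + 1))) :
    extendAlongCyc g ρ (toPerm (m + 1) (sig (m + 1) k) * π) = g k * extendAlongCyc g ρ π := by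
  have hs : IsTypeARel (m + 1) fun k => toPerm (m + 1) (sig (m + 1) k) :=
    .of_hom _ (toPerm_sig_sq _)
  obtain ⟨a, ha, τ, rfl⟩ : ∃ a ≤ m, ∃ τ, π = cyc m a * succPerm τ :=
    ⟨π 0, by omega, _, (cyc_mul_succPerm_decomposeFin π).symm⟩
  rw [extendAlongCyc_cyc_mul ρ ha, ← mul_assoc, ← mul_assoc, cyc]
  rcases (show k < a ∨ k = a ∨ k = a + 1 ∨ a + 2 ≤ k by omega) with h | rfl | rfl | h
  · rw [hs.mul_descProd_of_lt hk h ha, hg.mul_descProd_of_lt hk h ha, mul_assoc, mul_assoc,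
      ← succPerm_toPerm_sig hk (by omega), ← succPerm_mul, ← cyc, extendAlongCyc_cyc_mul ρ ha,
      hρ k hk (by omega)]
  · obtain ⟨b, rfl⟩ : ∃ b, k = b + 1 := ⟨k - 1, by omega⟩
    rw [hs.mul_descProd_self ha, hg.mul_descProd_self ha, ← cyc,
      extendAlongCyc_cyc_mul ρ (by omega)]
  · rw [← descProd_succ (g := fun k => toPerm (m + 1) (sig (m + 1) k)) (by omega),
      ← descProd_succ (by omega), ← cyc, extendAlongCyc_cyc_mul ρ (by omega)]
  · obtain ⟨l, rfl⟩ : ∃ l, k = l + 1 := ⟨k - 1, by omega⟩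
    rw [(hs.commute_descProd h (by omega)).eq, (hg.commute_descProd h (by omega)).eq, mul_assoc,
      mul_assoc, ← succPerm_toPerm_sig (by omega) (by omega), ← succPerm_mul, ← cyc,
      extendAlongCyc_cyc_mul ρ ha, hρ l (by omega) (by omega)]

/-- The Coxeter presentation of the symmetric group, in the form of an equivariant map. -/
theorem IsTypeARel.exists_equivariant (hg : IsTypeARel m g) :
    ∃ ρ : Perm (Fin m) → Q, ρ 1 = 1 ∧
      ∀ k, 1 ≤ k → k < m → ∀ π, ρ (toPerm m (sig m k) * π) = g k * ρ π := by
  induction m generalizing g with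
  | zero => exact ⟨fun _ => 1, rfl, fun k hk hkm => absurd hkm (by omega)⟩
  | succ m ih =>
    obtain ⟨ρ, hρ1, hρ⟩ := ih hg.shift
    refine ⟨extendAlongCyc g ρ, ?_, fun k hk hkm => hg.extendAlongCyc_mul hρ hk hkm⟩
    have h := extendAlongCyc_cyc_mul (g := g) ρ (Nat.zero_le m) 1
    rwa [cyc, descProd_of_lt zero_lt_one, succPerm_one, one_mul, hρ1, mul_one] at h

end Lift

theorem ker_toPerm_le_ker {Q : Type*} [Group Q] {m : ℕ} (φ : BraidGroup m →* Q)
    (hφ : ∀ k, φ (sig m k) ^ 2 = 1) : (toPerm m).ker ≤ φ.ker := by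
  obtain ⟨ρ, hρ1, hρ⟩ := (IsTypeARel.of_hom φ hφ).exists_equivariant
  have key : ∀ b π, ρ (toPerm m b * π) = φ b * ρ π := by
    intro b
    refine closure_induction (p := fun b _ => ∀ π, ρ (toPerm m b * π) = φ b * ρ π) ?_ ?_ ?_ ?_
      (PresentedGroup.closure_range_of _ ▸ mem_top b)
    · rintro _ ⟨i, rfl⟩
      rw [show PresentedGroup.of i = sig m (i + 1) from σ_eq_sig i]
      exact hρ _ (by omega) (by omega)
    · simp
    · intro x y _ _ hx hy π
      rw [map_mul, map_mul, mul_assoc, hx, hy, mul_assoc]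
    · intro x _ hx π
      rw [map_inv, map_inv, eq_inv_mul_iff_mul_eq, ← hx, mul_inv_cancel_left]
  intro b hb
  simpa [MonoidHom.mem_ker.mp hb, hρ1] using (key b 1).symm

theorem pureBraid_le_closure_agenSet (m : ℕ) : PureBraid m ≤ closure (agenSet m (pairs m)) := by
  have := closure_agenSet_normal m
  intro b hb
  rw [← QuotientGroup.eq_one_iff]
  refine ker_toPerm_le_ker (QuotientGroup.mk' _) (fun k => ?_) hb
  by_cases hk : 1 ≤ k ∧ k ≤ m - 1
  · rw [← map_pow, ← agen_self_succ, QuotientGroup.mk'_apply, QuotientGroup.eq_one_iff]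
    exact agen_mem_closure ⟨hk.1, by omega, by omega⟩
  · rw [sig_eq_one hk, map_one, one_pow]

theorem coe_A {m i j : ℕ} (hij : i < j) : (A m i j : BraidGroup m) = Agen m i j := by
  show ASym m i j = _
  rw [ASym, if_neg hij.ne, min_eq_left hij.le, max_eq_right hij.le]

def ASet (m : ℕ) (I : Set (ℕ × ℕ)) : Set (P m) := (fun p => A m p.1 p.2) '' I

theorem mem_closure_ASet_iff {m : ℕ} {I : Set (ℕ × ℕ)} (hI : ∀ p ∈ I, p.1 < p.2) {x : P m} :
    x ∈ closure (ASet m I) ↔ (x : BraidGroup m) ∈ closure (agenSet m I) := by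
  have himage : (PureBraid m).subtype '' ASet m I = agenSet m I := by
    rw [ASet, agenSet, Set.image_image]
    exact Set.image_congr fun p hp => coe_A (hI p hp)
  rw [← himage, ← MonoidHom.map_closure]
  exact (mem_map_iff_mem (PureBraid m).subtype_injective).symm

theorem closure_ASet_pairs (m : ℕ) : closure (ASet m (pairs m)) = ⊤ :=
  eq_top_iff.mpr fun x _ =>
    (mem_closure_ASet_iff fun _ hp => hp.2.1).mpr (pureBraid_le_closure_agenSet m x.2)

section Stabilization

variable {n i j k : ℕ}

def stab (n : ℕ) : BraidGroup n →* BraidGroup (n + 1) :=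
  PresentedGroup.toGroup (f := fun i => σ (Fin.castLE (by omega) i)) <| by
    rintro r (⟨i, j, h, rfl⟩ | ⟨i, j, h, rfl⟩) <;>
      simp only [map_mul, map_inv, FreeGroup.lift_apply_of, mul_inv_eq_one]
    · exact σ_braid (by simpa using h)
    · exact σ_commute (by simpa using h)

theorem stab_sig (hk : k < n) : stab n (sig n k) = sig (n + 1) k := by
  by_cases h : 1 ≤ k ∧ k ≤ n - 1
  · rw [sig, dif_pos h, sig, dif_pos ⟨h.1, by omega⟩]
    exact PresentedGroup.toGroup.of _
  · rw [sig_eq_one h, sig_eq_one (by omega), map_one]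

theorem stab_chain (hj : j ≤ n) : stab n (chain n i j) = chain (n + 1) i j := by
  rw [chain, chain, map_list_prod, List.map_map]
  refine congrArg _ (List.map_congr_left fun t ht => stab_sig ?_)
  have := List.mem_range.mp ht
  omega

theorem stab_agen (hij : i < j) (hj : j ≤ n) : stab n (Agen n i j) = Agen (n + 1) i j := by
  rw [Agen, Agen, map_mul, map_mul, map_inv, map_pow, stab_chain hj, stab_sig (by omega)]

theorem stab_mem_pureBraid {x : BraidGroup n} (hx : x ∈ PureBraid n) :
    stab n x ∈ PureBraid (n + 1) := by
  have h : (closure (agenSet n (pairs n))).map (stab n) ≤ PureBraid (n + 1) := by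
    rw [MonoidHom.map_closure, closure_le]
    rintro _ ⟨_, ⟨⟨i, j⟩, ⟨_, hij, hj⟩, rfl⟩, rfl⟩
    dsimp only at hij hj ⊢
    rw [stab_agen hij hj]
    exact Agen_mem (n + 1) i j
  exact h ⟨x, pureBraid_le_closure_agenSet n hx, rfl⟩

def stabP (n : ℕ) : P n →* P (n + 1) :=
  ((stab n).domRestrict (PureBraid n)).codRestrict _ fun x => stab_mem_pureBraid x.2

theorem stabP_A (hij : i < j) (hj : j ≤ n) : stabP n (A n i j) = A (n + 1) i j :=
  Subtype.ext <| by
    show stab n (A n i j) = (A (n + 1) i j : BraidGroup (n + 1))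
    rw [coe_A hij, coe_A hij, stab_agen hij hj]

end Stabilization

section LastStrand

variable {n : ℕ}

theorem pureBraid_le_normalizer_column (n : ℕ) :
    PureBraid (n + 1) ≤
      normalizer (closure (agenSet (n + 1) (column (n + 1))) : Set (BraidGroup (n + 1))) := by
  refine (pureBraid_le_closure_agenSet _).trans ((closure_le _).mpr ?_)
  rintro _ ⟨⟨i, j⟩, ⟨hi, hij, hj⟩, rfl⟩
  dsimp only at hi hij hj ⊢
  rcases eq_or_lt_of_le hj with rfl | hj
  · exact le_normalizer (agen_mem_closure ⟨hi, hij, rfl⟩)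
  · have hsig : ∀ k < n, sig (n + 1) k ∈
        normalizer (closure (agenSet (n + 1) (column (n + 1))) : Set (BraidGroup (n + 1))) :=
      fun k hk => sig_mem_normalizer_column (by omega) le_rfl
    have hchain : chain (n + 1) i j ∈
        normalizer (closure (agenSet (n + 1) (column (n + 1))) : Set (BraidGroup (n + 1))) :=
      list_prod_mem fun g hg => by
        obtain ⟨t, ht, rfl⟩ := List.mem_map.mp hg
        exact hsig _ (by have := List.mem_range.mp ht; omega)
    exact mul_mem (mul_mem hchain (pow_mem (hsig i (by omega)) 2)) (inv_mem hchain)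

theorem ker_le_closure_column {D : P (n + 1) →* P n}
    (hD : IsStrandRemoval (n + 1) (n + 1) D) :
    D.ker ≤ closure (ASet (n + 1) (column (n + 1))) := by
  set N := (closure (agenSet (n + 1) (column (n + 1)))).subgroupOf (PureBraid (n + 1))
  have hle : closure (agenSet (n + 1) (column (n + 1))) ≤ PureBraid (n + 1) :=
    (closure_le _).mpr fun _ ⟨p, _, hp⟩ => hp ▸ Agen_mem _ _ _
  have : N.Normal := (normal_subgroupOf_iff_le_normalizer hle).mpr
    (pureBraid_le_normalizer_column n)
  have hq : QuotientGroup.mk' N = (QuotientGroup.mk' N).comp ((stabP n).comp D) := by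
    refine MonoidHom.eq_of_eqOn_dense (closure_ASet_pairs (n + 1)) ?_
    rintro _ ⟨⟨i, j⟩, ⟨hi, hij, hj⟩, rfl⟩
    dsimp only at hi hij hj ⊢
    rw [MonoidHom.comp_apply, MonoidHom.comp_apply, hD i j hi hij hj]
    rcases eq_or_lt_of_le hj with rfl | hj
    · rw [if_pos (Or.inr rfl), map_one, map_one, QuotientGroup.mk'_apply,
        QuotientGroup.eq_one_iff, mem_subgroupOf, coe_A hij]
      exact agen_mem_closure ⟨hi, hij, rfl⟩
    · rw [if_neg (by omega), phi, phi, if_pos (by omega), if_pos hj]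
      exact congrArg _ (stabP_A (n := n) hij (by omega)).symm
  intro x hx
  rw [mem_closure_ASet_iff fun _ hp => hp.2.1, ← mem_subgroupOf, ← QuotientGroup.eq_one_iff,
    ← QuotientGroup.mk'_apply, hq, MonoidHom.comp_apply, MonoidHom.comp_apply,
    MonoidHom.mem_ker.mp hx, map_one, map_one]

end LastStrand

section Faces

variable {m i j : ℕ}

theorem del_apply (n : ℕ) (d : ℕ → (P n →* P (n - 1))) (θ : MulAut (P n)) (x : P n) :
    del n d θ x = d 1 (θ x) := rfl

theorem A_comm (m i j : ℕ) : A m i j = A m j i :=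
  Subtype.ext <| by
    show ASym m i j = ASym m j i
    rw [ASym, ASym, min_comm, max_comm]
    exact if_congr eq_comm rfl rfl

theorem A_self (m i : ℕ) : A m i i = 1 :=
  Subtype.ext <| if_pos rfl

theorem A₀_eq (m j : ℕ) : A₀ m j = (((List.range m).map fun t => A m (t + 1) j).prod)⁻¹ :=
  Subtype.ext <| by simp [A₀, A0gen, A, List.map_map, Function.comp_def]

theorem IsStrandRemoval.one_apply_A {d₁ : P (m + 1) →* P m} (h : IsStrandRemoval (m + 1) 1 d₁)
    (hi : 1 ≤ i) (hj : 1 ≤ j) (him : i ≤ m) (hjm : j ≤ m) :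
    d₁ (A (m + 1) (i + 1) (j + 1)) = A m i j := by
  rcases lt_trichotomy i j with hij | rfl | hij
  · rw [h (i + 1) (j + 1) (by omega) (by omega) (by omega), if_neg (by omega), phi, phi,
      if_neg (by omega), if_neg (by omega)]
    rfl
  · rw [A_self, A_self, map_one]
  · rw [A_comm, h (j + 1) (i + 1) (by omega) (by omega) (by omega), if_neg (by omega), phi, phi,
      if_neg (by omega), if_neg (by omega), A_comm]
    rfl

theorem IsStrandRemoval.one_apply_A_one {d₁ : P (m + 1) →* P m}
    (h : IsStrandRemoval (m + 1) 1 d₁) (hj : 1 ≤ j) (hjm : j ≤ m) :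
    d₁ (A (m + 1) 1 (j + 1)) = 1 := by
  rw [h 1 (j + 1) le_rfl (by omega) (by omega), if_pos (Or.inl rfl)]

theorem IsStrandRemoval.one_apply_A₀ {d₁ : P (m + 1) →* P m} (h : IsStrandRemoval (m + 1) 1 d₁)
    (hj : 1 ≤ j) (hjm : j ≤ m) : d₁ (A₀ (m + 1) (j + 1)) = A₀ m j := by
  rw [A₀_eq, A₀_eq, map_inv, map_list_prod, List.map_map, List.prod_range_succ',
    Function.comp_apply, zero_add, h.one_apply_A_one hj hjm, one_mul]
  congr 2
  refine List.map_congr_left fun t ht => ?_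
  rw [List.mem_range] at ht
  exact h.one_apply_A (by omega) hj (by omega) hjm

theorem IsStrandRemoval.one_apply_theta_A₀_self {d₁ : P (m + 1) →* P m}
    (h : IsStrandRemoval (m + 1) 1 d₁) {θ : MulAut (P (m + 1))} (hθ : IsTheta (m + 1) θ) :
    d₁ (θ (A₀ (m + 1) (m + 1))) = 1 := by
  rcases Nat.eq_zero_or_pos m with rfl | hm
  · simp [A₀_eq, A_self]
  have hfixed : ∀ t ∈ List.range m, d₁ (θ (A (m + 1) (t + 1 + 1) (m + 1))) = A m (t + 1) m := by
    intro t ht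
    rw [List.mem_range] at ht
    rcases eq_or_lt_of_le (Nat.succ_le_of_lt ht) with ht | ht
    · subst ht
      rw [A_self, A_self, map_one, map_one]
    · rw [hθ.1 (t + 2) (m + 1) (by omega) (by omega) le_rfl,
        h.one_apply_A (by omega) hm ht.le le_rfl]
  rw [A₀_eq, map_inv, map_inv, map_list_prod, map_list_prod, List.map_map, List.map_map,
    List.prod_range_succ', Function.comp_apply, Function.comp_apply, zero_add,
    hθ.2 (m + 1) (by omega) le_rfl, map_mul, map_mul, map_inv, h.one_apply_A_one hm le_rfl,
    h.one_apply_A₀ hm le_rfl, inv_one, one_mul, mul_one]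
  simp only [Function.comp_apply, Nat.succ_eq_add_one]
  rw [List.map_congr_left hfixed, ← inv_inv (List.prod _), ← A₀_eq, mul_inv_cancel, inv_one]

theorem del_A_one_last {n : ℕ} {D : ℕ → (P (n + 1) →* P n)}
    (hD1 : IsStrandRemoval (n + 1) 1 (D 1)) {Θ : MulAut (P (n + 1))} (hΘ : IsTheta (n + 1) Θ)
    (hn : 1 ≤ n) : del (n + 1) D Θ (A (n + 1) 1 (n + 1)) = A₀ n n := by
  rw [del_apply, hΘ.2 _ (by omega) le_rfl, map_mul, map_mul, map_inv,
    hD1.one_apply_A_one hn le_rfl, hD1.one_apply_A₀ hn le_rfl, inv_one, one_mul, mul_one]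

end Faces

theorem del_del_eq_del_d1_on_ker_general (n : ℕ)
    (d : ℕ → (P n →* P (n - 1)))
    (hd : ∀ k, 1 ≤ k → k ≤ n → IsStrandRemoval n k (d k))
    (θ : MulAut (P n)) (hθ : IsTheta n θ)
    (D : ℕ → (P (n + 1) →* P n))
    (hD : ∀ k, 1 ≤ k → k ≤ n + 1 → IsStrandRemoval (n + 1) k (D k))
    (Θ : MulAut (P (n + 1))) (hΘ : IsTheta (n + 1) Θ)
    (β : P (n + 1)) (hβ : D (n + 1) β = 1) :
    del n d θ (del (n + 1) D Θ β) = del n d θ (D 1 β) := by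
  have hgen : Set.EqOn ((del n d θ).comp (del (n + 1) D Θ)) ((del n d θ).comp (D 1))
      (ASet (n + 1) (column (n + 1))) := by
    rintro _ ⟨⟨i, j⟩, ⟨hi, hij, rfl⟩, rfl⟩
    dsimp only at hi hij ⊢
    rw [MonoidHom.comp_apply, MonoidHom.comp_apply]
    rcases eq_or_lt_of_le hi with rfl | hi
    · have hD1 := hD 1 le_rfl (by omega)
      rw [del_A_one_last hD1 hΘ (by omega), hD1.one_apply_A_one (by omega) le_rfl, map_one]
      obtain ⟨m, rfl⟩ : ∃ m, n = m + 1 := ⟨n - 1, by omega⟩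
      exact (hd 1 le_rfl (by omega)).one_apply_theta_A₀_self hθ
    · rw [del_apply (n + 1), hΘ.1 i (n + 1) hi hij le_rfl]
  exact MonoidHom.eqOn_closure hgen (ker_le_closure_column (hD (n + 1) (by omega) le_rfl) hβ)

/-- For every `n ≥ 2` and every `β ∈ P (n+1)` with `d_{n+1} β = 1`, one has
`∂_n (∂_{n+1} β) = ∂_n (d_1 β)` (the key Delta-group identity on `Ker d_{n+1}`). -/
theorem del_del_eq_del_d1_on_ker (n : ℕ) (hn : 2 ≤ n)
    (d : ℕ → (P n →* P (n - 1)))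
    (hd : ∀ k, 1 ≤ k → k ≤ n → IsStrandRemoval n k (d k))
    (θ : MulAut (P n)) (hθ : IsTheta n θ)
    (D : ℕ → (P (n + 1) →* P n))
    (hD : ∀ k, 1 ≤ k → k ≤ n + 1 → IsStrandRemoval (n + 1) k (D k))
    (Θ : MulAut (P (n + 1))) (hΘ : IsTheta (n + 1) Θ)
    (β : P (n + 1)) (hβ : D (n + 1) β = 1) :
    del n d θ (del (n + 1) D Θ β) = del n d θ (D 1 β) :=
  del_del_eq_del_d1_on_ker_general n d hd θ hθ D hD Θ hΘ β hβ

end Braids
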